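/- In a †-mix category the following square commutes for all objects A, B: λ⊕ ; (mx_{A,B})† = mx_{A†,B†} ; λ⊗ : A† ⊕ B† → (A ⊕ B)†, where mx is the mixor. -/

import Mathlib

/-!
With `l`, `r` the unitors, the mixor is `mx = (1 ⊗ (l⊕⁻¹ ; (m ⊕ 1))) ; ∂L ; (r⊗ ⊕ 1)`.
Daggering it after `λ⊗`, [†-ldc.2] turns `r⊗†` into `r⊕⁻¹ ; (1 ⊕ λ⊥) ; λ⊕`, [†-ldc.3]
trades `∂L†` for `∂R`, and [†-mix] with [†-ldc.2] turns the dagger of `l⊕⁻¹ ; (m ⊕ 1)` into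
`(m ⊗ 1) ; l⊗`. What remains is `(r⊕⁻¹ ⊗ 1) ; ∂R ; (1 ⊕ ((m ⊗ 1) ; l⊗))`, the other
presentation of the mixor of `A†, B†` given by the mix coherence, followed by `λ⊕`.
-/

open CategoryTheory

universe v u v₂ u₂ v₃ u₃

/-- A linearly distributive category (LDC): a category with two monoidal structures
`T = (⊗, ⊤)` (tensor) and `P = (⊕, ⊥)` (par), linked by natural linear distributors
`∂L : A ⊗ (B ⊕ X) ⟶ (A ⊗ B) ⊕ X` and `∂R : (A ⊕ B) ⊗ X ⟶ A ⊕ (B ⊗ X)`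
(satisfying the Cockett–Seely coherence conditions). -/
structure LDC (C : Type u) [Category.{v} C] where
  T : MonoidalCategory C
  P : MonoidalCategory C
  distL : ∀ A B X : C, T.tensorObj A (P.tensorObj B X) ⟶ P.tensorObj (T.tensorObj A B) X
  distR : ∀ A B X : C, T.tensorObj (P.tensorObj A B) X ⟶ P.tensorObj A (T.tensorObj B X)
  distL_natural : ∀ {A A' B B' X X' : C} (f : A ⟶ A') (g : B ⟶ B') (h : X ⟶ X'),
    T.tensorHom f (P.tensorHom g h) ≫ distL A' B' X'
      = distL A B X ≫ P.tensorHom (T.tensorHom f g) h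
  distR_natural : ∀ {A A' B B' X X' : C} (f : A ⟶ A') (g : B ⟶ B') (h : X ⟶ X'),
    T.tensorHom (P.tensorHom f g) h ≫ distR A' B' X'
      = distR A B X ≫ P.tensorHom f (T.tensorHom g h)

namespace LDC

variable {C : Type u} [Category.{v} C]

/-- tensor on objects -/
abbrev ot (L : LDC C) (A B : C) : C := L.T.tensorObj A B
/-- par on objects -/
abbrev op (L : LDC C) (A B : C) : C := L.P.tensorObj A B
/-- tensor unit ⊤ -/
abbrev tu (L : LDC C) : C := L.T.tensorUnit
/-- par unit ⊥ -/
abbrev pu (L : LDC C) : C := L.P.tensorUnit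
/-- tensor on morphisms -/
abbrev oth (L : LDC C) {A B A' B' : C} (f : A ⟶ A') (g : B ⟶ B') :
    L.ot A B ⟶ L.ot A' B' := L.T.tensorHom f g
/-- par on morphisms -/
abbrev oph (L : LDC C) {A B A' B' : C} (f : A ⟶ A') (g : B ⟶ B') :
    L.op A B ⟶ L.op A' B' := L.P.tensorHom f g
/-- associator of the tensor -/
abbrev aT (L : LDC C) (A B X : C) : L.ot (L.ot A B) X ≅ L.ot A (L.ot B X) := L.T.associator A B X
/-- associator of the par -/
abbrev aP (L : LDC C) (A B X : C) : L.op (L.op A B) X ≅ L.op A (L.op B X) := L.P.associator A B X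
/-- left unitor of the tensor -/
abbrev luT (L : LDC C) (A : C) : L.ot L.tu A ≅ A := L.T.leftUnitor A
/-- right unitor of the tensor -/
abbrev ruT (L : LDC C) (A : C) : L.ot A L.tu ≅ A := L.T.rightUnitor A
/-- left unitor of the par -/
abbrev luP (L : LDC C) (A : C) : L.op L.pu A ≅ A := L.P.leftUnitor A
/-- right unitor of the par -/
abbrev ruP (L : LDC C) (A : C) : L.op A L.pu ≅ A := L.P.rightUnitor A

end LDC

section LinearFunctor

variable {C : Type u} [Category.{v} C] {D : Type u₂} [Category.{v₂} D]

/-- The data of a linear functor between LDCs: a pair of functors `Ft` (tensor part,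
lax `⊗`-monoidal via `mT, mU`) and `Fp` (par part, `⊕`-comonoidal via `nP, nU`), together
with the four linear strengths `vtR, vtL, vpR, vpL`. -/
structure LinearFunctorData (X : LDC C) (Y : LDC D) where
  Ft : C ⥤ D
  Fp : C ⥤ D
  mT : ∀ A B : C, Y.ot (Ft.obj A) (Ft.obj B) ⟶ Ft.obj (X.ot A B)
  mU : Y.tu ⟶ Ft.obj X.tu
  nP : ∀ A B : C, Fp.obj (X.op A B) ⟶ Y.op (Fp.obj A) (Fp.obj B)
  nU : Fp.obj X.pu ⟶ Y.pu
  vtR : ∀ A B : C, Ft.obj (X.op A B) ⟶ Y.op (Fp.obj A) (Ft.obj B)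
  vtL : ∀ A B : C, Ft.obj (X.op A B) ⟶ Y.op (Ft.obj A) (Fp.obj B)
  vpR : ∀ A B : C, Y.ot (Ft.obj A) (Fp.obj B) ⟶ Fp.obj (X.ot A B)
  vpL : ∀ A B : C, Y.ot (Fp.obj A) (Ft.obj B) ⟶ Fp.obj (X.ot A B)

/-- The coherence laws of a linear functor: naturality of all the structure maps,
lax monoidality of `(Ft, mT, mU)`, comonoidality of `(Fp, nP, nU)`, and the
Cockett–Seely coherences [LF.1]–[LF.5]. -/
structure LinearFunctorLaws {X : LDC C} {Y : LDC D} (F : LinearFunctorData X Y) : Prop where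
  mT_natural : ∀ {A A' B B' : C} (f : A ⟶ A') (g : B ⟶ B'),
    Y.oth (F.Ft.map f) (F.Ft.map g) ≫ F.mT A' B' = F.mT A B ≫ F.Ft.map (X.oth f g)
  mT_assoc : ∀ A B Cc : C,
    Y.oth (F.mT A B) (𝟙 (F.Ft.obj Cc)) ≫ F.mT (X.ot A B) Cc ≫ F.Ft.map (X.aT A B Cc).hom
      = (Y.aT (F.Ft.obj A) (F.Ft.obj B) (F.Ft.obj Cc)).hom
          ≫ Y.oth (𝟙 (F.Ft.obj A)) (F.mT B Cc) ≫ F.mT A (X.ot B Cc)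
  mT_lu : ∀ A : C,
    Y.oth F.mU (𝟙 (F.Ft.obj A)) ≫ F.mT X.tu A ≫ F.Ft.map (X.luT A).hom
      = (Y.luT (F.Ft.obj A)).hom
  mT_ru : ∀ A : C,
    Y.oth (𝟙 (F.Ft.obj A)) F.mU ≫ F.mT A X.tu ≫ F.Ft.map (X.ruT A).hom
      = (Y.ruT (F.Ft.obj A)).hom
  nP_natural : ∀ {A A' B B' : C} (f : A ⟶ A') (g : B ⟶ B'),
    F.Fp.map (X.oph f g) ≫ F.nP A' B' = F.nP A B ≫ Y.oph (F.Fp.map f) (F.Fp.map g)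
  nP_assoc : ∀ A B Cc : C,
    F.nP (X.op A B) Cc ≫ Y.oph (F.nP A B) (𝟙 (F.Fp.obj Cc))
        ≫ (Y.aP (F.Fp.obj A) (F.Fp.obj B) (F.Fp.obj Cc)).hom
      = F.Fp.map (X.aP A B Cc).hom ≫ F.nP A (X.op B Cc) ≫ Y.oph (𝟙 (F.Fp.obj A)) (F.nP B Cc)
  nP_lu : ∀ A : C,
    F.Fp.map (X.luP A).hom
      = F.nP X.pu A ≫ Y.oph F.nU (𝟙 (F.Fp.obj A)) ≫ (Y.luP (F.Fp.obj A)).hom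
  nP_ru : ∀ A : C,
    F.Fp.map (X.ruP A).hom
      = F.nP A X.pu ≫ Y.oph (𝟙 (F.Fp.obj A)) F.nU ≫ (Y.ruP (F.Fp.obj A)).hom
  vtR_natural : ∀ {A A' B B' : C} (f : A ⟶ A') (g : B ⟶ B'),
    F.Ft.map (X.oph f g) ≫ F.vtR A' B' = F.vtR A B ≫ Y.oph (F.Fp.map f) (F.Ft.map g)
  vtL_natural : ∀ {A A' B B' : C} (f : A ⟶ A') (g : B ⟶ B'),
    F.Ft.map (X.oph f g) ≫ F.vtL A' B' = F.vtL A B ≫ Y.oph (F.Ft.map f) (F.Fp.map g)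
  vpR_natural : ∀ {A A' B B' : C} (f : A ⟶ A') (g : B ⟶ B'),
    Y.oth (F.Ft.map f) (F.Fp.map g) ≫ F.vpR A' B' = F.vpR A B ≫ F.Fp.map (X.oth f g)
  vpL_natural : ∀ {A A' B B' : C} (f : A ⟶ A') (g : B ⟶ B'),
    Y.oth (F.Fp.map f) (F.Ft.map g) ≫ F.vpL A' B' = F.vpL A B ≫ F.Fp.map (X.oth f g)
  lf1a : ∀ A : C,
    F.Ft.map (X.luP A).hom
      = F.vtR X.pu A ≫ Y.oph F.nU (𝟙 (F.Ft.obj A)) ≫ (Y.luP (F.Ft.obj A)).hom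
  lf1b : ∀ A : C,
    F.Ft.map (X.ruP A).hom
      = F.vtL A X.pu ≫ Y.oph (𝟙 (F.Ft.obj A)) F.nU ≫ (Y.ruP (F.Ft.obj A)).hom
  lf1c : ∀ A : C,
    (Y.luT (F.Fp.obj A)).inv ≫ Y.oth F.mU (𝟙 (F.Fp.obj A)) ≫ F.vpR X.tu A
      = F.Fp.map (X.luT A).inv
  lf1d : ∀ A : C,
    (Y.ruT (F.Fp.obj A)).inv ≫ Y.oth (𝟙 (F.Fp.obj A)) F.mU ≫ F.vpL A X.tu
      = F.Fp.map (X.ruT A).inv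
  lf2a : ∀ A B Cc : C,
    F.Ft.map (X.aP A B Cc).hom ≫ F.vtR A (X.op B Cc) ≫ Y.oph (𝟙 (F.Fp.obj A)) (F.vtR B Cc)
      = F.vtR (X.op A B) Cc ≫ Y.oph (F.nP A B) (𝟙 (F.Ft.obj Cc))
          ≫ (Y.aP (F.Fp.obj A) (F.Fp.obj B) (F.Ft.obj Cc)).hom
  lf2b : ∀ A B Cc : C,
    F.Ft.map (X.aP A B Cc).hom ≫ F.vtL A (X.op B Cc) ≫ Y.oph (𝟙 (F.Ft.obj A)) (F.nP B Cc)
      = F.vtL (X.op A B) Cc ≫ Y.oph (F.vtL A B) (𝟙 (F.Fp.obj Cc))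
          ≫ (Y.aP (F.Ft.obj A) (F.Fp.obj B) (F.Fp.obj Cc)).hom
  lf2c : ∀ A B Cc : C,
    Y.oth (F.mT A B) (𝟙 (F.Fp.obj Cc)) ≫ F.vpR (X.ot A B) Cc ≫ F.Fp.map (X.aT A B Cc).hom
      = (Y.aT (F.Ft.obj A) (F.Ft.obj B) (F.Fp.obj Cc)).hom
          ≫ Y.oth (𝟙 (F.Ft.obj A)) (F.vpR B Cc) ≫ F.vpR A (X.ot B Cc)
  lf2d : ∀ A B Cc : C,
    Y.oth (F.vpL A B) (𝟙 (F.Ft.obj Cc)) ≫ F.vpL (X.ot A B) Cc ≫ F.Fp.map (X.aT A B Cc).hom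
      = (Y.aT (F.Fp.obj A) (F.Ft.obj B) (F.Ft.obj Cc)).hom
          ≫ Y.oth (𝟙 (F.Fp.obj A)) (F.mT B Cc) ≫ F.vpL A (X.ot B Cc)
  lf3a : ∀ A B Cc : C,
    F.Ft.map (X.aP A B Cc).hom ≫ F.vtR A (X.op B Cc) ≫ Y.oph (𝟙 (F.Fp.obj A)) (F.vtL B Cc)
      = F.vtL (X.op A B) Cc ≫ Y.oph (F.vtR A B) (𝟙 (F.Fp.obj Cc))
          ≫ (Y.aP (F.Fp.obj A) (F.Ft.obj B) (F.Fp.obj Cc)).hom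
  lf3b : ∀ A B Cc : C,
    Y.oth (F.vpR A B) (𝟙 (F.Ft.obj Cc)) ≫ F.vpL (X.ot A B) Cc ≫ F.Fp.map (X.aT A B Cc).hom
      = (Y.aT (F.Ft.obj A) (F.Fp.obj B) (F.Ft.obj Cc)).hom
          ≫ Y.oth (𝟙 (F.Ft.obj A)) (F.vpL B Cc) ≫ F.vpR A (X.ot B Cc)
  lf4a : ∀ A B Cc : C,
    Y.oth (𝟙 (F.Ft.obj A)) (F.vtR B Cc)
        ≫ Y.distL (F.Ft.obj A) (F.Fp.obj B) (F.Ft.obj Cc)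
        ≫ Y.oph (F.vpR A B) (𝟙 (F.Ft.obj Cc))
      = F.mT A (X.op B Cc) ≫ F.Ft.map (X.distL A B Cc) ≫ F.vtR (X.ot A B) Cc
  lf4b : ∀ A B Cc : C,
    Y.oth (F.vtL A B) (𝟙 (F.Ft.obj Cc))
        ≫ Y.distR (F.Ft.obj A) (F.Fp.obj B) (F.Ft.obj Cc)
        ≫ Y.oph (𝟙 (F.Ft.obj A)) (F.vpL B Cc)
      = F.mT (X.op A B) Cc ≫ F.Ft.map (X.distR A B Cc) ≫ F.vtL A (X.ot B Cc)
  lf4c : ∀ A B Cc : C,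
    Y.oth (𝟙 (F.Fp.obj A)) (F.vtL B Cc)
        ≫ Y.distL (F.Fp.obj A) (F.Ft.obj B) (F.Fp.obj Cc)
        ≫ Y.oph (F.vpL A B) (𝟙 (F.Fp.obj Cc))
      = F.vpL A (X.op B Cc) ≫ F.Fp.map (X.distL A B Cc) ≫ F.nP (X.ot A B) Cc
  lf4d : ∀ A B Cc : C,
    Y.oth (F.vtR A B) (𝟙 (F.Fp.obj Cc))
        ≫ Y.distR (F.Fp.obj A) (F.Ft.obj B) (F.Fp.obj Cc)
        ≫ Y.oph (𝟙 (F.Fp.obj A)) (F.vpR B Cc)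
      = F.vpR (X.op A B) Cc ≫ F.Fp.map (X.distR A B Cc) ≫ F.nP A (X.ot B Cc)
  lf5a : ∀ A B Cc : C,
    Y.oth (𝟙 (F.Ft.obj A)) (F.vtL B Cc)
        ≫ Y.distL (F.Ft.obj A) (F.Ft.obj B) (F.Fp.obj Cc)
        ≫ Y.oph (F.mT A B) (𝟙 (F.Fp.obj Cc))
      = F.mT A (X.op B Cc) ≫ F.Ft.map (X.distL A B Cc) ≫ F.vtL (X.ot A B) Cc
  lf5b : ∀ A B Cc : C,
    Y.oth (F.vtR A B) (𝟙 (F.Ft.obj Cc))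
        ≫ Y.distR (F.Fp.obj A) (F.Ft.obj B) (F.Ft.obj Cc)
        ≫ Y.oph (𝟙 (F.Fp.obj A)) (F.mT B Cc)
      = F.mT (X.op A B) Cc ≫ F.Ft.map (X.distR A B Cc) ≫ F.vtR A (X.ot B Cc)
  lf5c : ∀ A B Cc : C,
    Y.oth (𝟙 (F.Ft.obj A)) (F.nP B Cc)
        ≫ Y.distL (F.Ft.obj A) (F.Fp.obj B) (F.Fp.obj Cc)
        ≫ Y.oph (F.vpR A B) (𝟙 (F.Fp.obj Cc))
      = F.vpR A (X.op B Cc) ≫ F.Fp.map (X.distL A B Cc) ≫ F.nP (X.ot A B) Cc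
  lf5d : ∀ A B Cc : C,
    Y.oth (F.nP A B) (𝟙 (F.Ft.obj Cc))
        ≫ Y.distR (F.Fp.obj A) (F.Fp.obj B) (F.Ft.obj Cc)
        ≫ Y.oph (𝟙 (F.Fp.obj A)) (F.vpL B Cc)
      = F.vpL (X.op A B) Cc ≫ F.Fp.map (X.distR A B Cc) ≫ F.nP A (X.ot B Cc)

/-- A linear functor between LDCs. -/
structure LinearFunctor (X : LDC C) (Y : LDC D) extends LinearFunctorData X Y where
  laws : LinearFunctorLaws toLinearFunctorData

end LinearFunctor
section Mix

variable {C : Type u} [Category.{v} C] {D : Type u₂} [Category.{v₂} D]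

/-- A mix category: an LDC with a mix map `m : ⊥ ⟶ ⊤` such that the two canonical
composites `A ⊗ B ⟶ A ⊕ B` (via the unitors, `m`, and the two linear distributors)
coincide. -/
structure MixCat (C : Type u) [Category.{v} C] where
  X : LDC C
  mix : X.pu ⟶ X.tu
  mix_coh : ∀ A B : C,
    X.oth (𝟙 A) ((X.luP B).inv ≫ X.oph mix (𝟙 B)) ≫ X.distL A X.tu B
        ≫ X.oph (X.ruT A).hom (𝟙 B)
      = X.oth ((X.ruP A).inv) (𝟙 B) ≫ X.distR A X.pu B
        ≫ X.oph (𝟙 A) (X.oth mix (𝟙 B) ≫ (X.luT B).hom)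

/-- The mixor `mx : A ⊗ B ⟶ A ⊕ B` of a mix category. -/
def MixCat.mx (M : MixCat C) (A B : C) : M.X.ot A B ⟶ M.X.op A B :=
  M.X.oth (𝟙 A) ((M.X.luP B).inv ≫ M.X.oph M.mix (𝟙 B)) ≫ M.X.distL A M.X.tu B
    ≫ M.X.oph (M.X.ruT A).hom (𝟙 B)

/-- An object is in the core of a mix category when all mixors out of it and into it
are isomorphisms. -/
def MixCat.inCore (M : MixCat C) (U : C) : Prop :=
  (∀ B : C, IsIso (M.mx U B)) ∧ (∀ B : C, IsIso (M.mx B U))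

/-- An isomix category: a mix category whose mix map is an isomorphism
(with specified inverse). -/
structure IsomixCat (C : Type u) [Category.{v} C] extends MixCat C where
  mixInv : X.tu ⟶ X.pu
  mix_mixInv : mix ≫ mixInv = 𝟙 X.pu
  mixInv_mix : mixInv ≫ mix = 𝟙 X.tu

/-- A Frobenius (linear) functor between LDCs: a linear functor whose tensor and par
parts coincide (`Ft = Fp = F`), with `m⊗ = ν⊕ᴸ = ν⊕ᴿ` and `n⊕ = ν⊗ᴸ = ν⊗ᴿ`. -/
structure FrobFunctor (X : LDC C) (Y : LDC D) where
  F : C ⥤ D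
  mT : ∀ A B : C, Y.ot (F.obj A) (F.obj B) ⟶ F.obj (X.ot A B)
  mU : Y.tu ⟶ F.obj X.tu
  nP : ∀ A B : C, F.obj (X.op A B) ⟶ Y.op (F.obj A) (F.obj B)
  nU : F.obj X.pu ⟶ Y.pu
  laws : LinearFunctorLaws (X := X) (Y := Y) ⟨F, F, mT, mU, nP, nU, nP, nP, mT, mT⟩

/-- The linear-functor data underlying a Frobenius functor. -/
def FrobFunctor.data {X : LDC C} {Y : LDC D} (G : FrobFunctor X Y) : LinearFunctorData X Y :=
  ⟨G.F, G.F, G.mT, G.mU, G.nP, G.nU, G.nP, G.nP, G.mT, G.mT⟩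

/-- A mix functor between mix categories: a Frobenius functor satisfying
`n⊥ ; m ; m⊤ = F(m)` ([mix-FF]). -/
def IsMixFunctor {M : MixCat C} {N : MixCat D} (G : FrobFunctor M.X N.X) : Prop :=
  G.nU ≫ N.mix ≫ G.mU = G.F.map M.mix

/-- The isomix condition [isomix-FF] on a Frobenius functor between isomix categories:
`m⊤ ; F(m⁻¹) ; n⊥ = m⁻¹`. -/
def IsIsomixFunctor {M : IsomixCat C} {N : IsomixCat D}
    (G : FrobFunctor M.X N.X) : Prop :=
  G.mU ≫ G.F.map M.mixInv ≫ G.nU = N.mixInv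

/-- A linear transformation `α : F ⇒ G` between (the data of) linear functors: a
monoidal transformation `α⊗ : F⊗ ⇒ G⊗` and a comonoidal transformation
`α⊕ : G⊕ ⇒ F⊕` satisfying [LT.1]–[LT.4]. -/
structure LinearTransf {X : LDC C} {Y : LDC D} (F G : LinearFunctorData X Y) where
  aT : ∀ A : C, F.Ft.obj A ⟶ G.Ft.obj A
  aT_natural : ∀ {A B : C} (f : A ⟶ B), F.Ft.map f ≫ aT B = aT A ≫ G.Ft.map f
  aP : ∀ A : C, G.Fp.obj A ⟶ F.Fp.obj A
  aP_natural : ∀ {A B : C} (f : A ⟶ B), G.Fp.map f ≫ aP B = aP A ≫ F.Fp.map f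
  aT_tensor : ∀ A B : C,
    Y.oth (aT A) (aT B) ≫ G.mT A B = F.mT A B ≫ aT (X.ot A B)
  aT_unit : F.mU ≫ aT X.tu = G.mU
  aP_cotensor : ∀ A B : C,
    aP (X.op A B) ≫ F.nP A B = G.nP A B ≫ Y.oph (aP A) (aP B)
  aP_counit : aP X.pu ≫ F.nU = G.nU
  lt1 : ∀ A B : C,
    aT (X.op A B) ≫ G.vtR A B ≫ Y.oph (aP A) (𝟙 (G.Ft.obj B))
      = F.vtR A B ≫ Y.oph (𝟙 (F.Fp.obj A)) (aT B)
  lt2 : ∀ A B : C,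
    aT (X.op A B) ≫ G.vtL A B ≫ Y.oph (𝟙 (G.Ft.obj A)) (aP B)
      = F.vtL A B ≫ Y.oph (aT A) (𝟙 (F.Fp.obj B))
  lt3 : ∀ A B : C,
    Y.oth (𝟙 (G.Fp.obj A)) (aT B) ≫ G.vpL A B ≫ aP (X.ot A B)
      = Y.oth (aP A) (𝟙 (F.Ft.obj B)) ≫ F.vpL A B
  lt4 : ∀ A B : C,
    Y.oth (aT A) (𝟙 (G.Fp.obj B)) ≫ G.vpR A B ≫ aP (X.ot A B)
      = Y.oth (𝟙 (F.Ft.obj A)) (aP B) ≫ F.vpR A B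

/-- `(η, ε) : A ⊣⊣ B` is a linear dual in an LDC: `η : ⊤ ⟶ A ⊕ B` and
`ε : B ⊗ A ⟶ ⊥` satisfy the two snake identities. -/
def IsLinearDual (X : LDC C) (A B : C) (η : X.tu ⟶ X.op A B) (ε : X.ot B A ⟶ X.pu) : Prop :=
  ((X.luT A).inv ≫ X.oth η (𝟙 A) ≫ X.distR A B A ≫ X.oph (𝟙 A) ε ≫ (X.ruP A).hom = 𝟙 A) ∧
  ((X.ruT B).inv ≫ X.oth (𝟙 B) η ≫ X.distL B A B ≫ X.oph ε (𝟙 B) ≫ (X.luP B).hom = 𝟙 B)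

/-- The degenerate LDC on a single monoidal structure (tensor = par), with the
associator isomorphisms as linear distributors. -/
def LDC.deg (Mo : MonoidalCategory C) : LDC C where
  T := Mo
  P := Mo
  distL A B X := (Mo.associator A B X).inv
  distR A B X := (Mo.associator A B X).hom
  distL_natural := by
    intro A A' B B' X X' f g h
    rw [Iso.comp_inv_eq, Category.assoc, Mo.associator_naturality, Iso.inv_hom_id_assoc]
  distR_natural := by
    intro A A' B B' X X' f g h
    exact Mo.associator_naturality f g h

end Mix
section Dagger

open Opposite

variable {C : Type u} [Category.{v} C]

/-- The data of a dagger on an LDC: a contravariant functor `(−)† : Cᵒᵖ ⥤ C` together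
with natural isomorphisms (laxors) `λ⊗ : A† ⊗ B† ≅ (A ⊕ B)†`, `λ⊕ : A† ⊕ B† ≅ (A ⊗ B)†`,
`λ⊤ : ⊤ ≅ ⊥†`, `λ⊥ : ⊥ ≅ ⊤†` and the involutor `ι : A ≅ A††`. -/
structure DagData (X : LDC C) where
  dag : Cᵒᵖ ⥤ C
  lamTens : ∀ A B : C, X.ot (dag.obj (op A)) (dag.obj (op B)) ≅ dag.obj (op (X.op A B))
  lamPar : ∀ A B : C, X.op (dag.obj (op A)) (dag.obj (op B)) ≅ dag.obj (op (X.ot A B))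
  lamTop : X.tu ≅ dag.obj (op X.pu)
  lamBot : X.pu ≅ dag.obj (op X.tu)
  invol : ∀ A : C, A ≅ dag.obj (op (dag.obj (op A)))

namespace DagData

variable {X : LDC C}

/-- `A†` -/
abbrev dg (D : DagData X) (A : C) : C := D.dag.obj (op A)

/-- `f† : B† ⟶ A†` for `f : A ⟶ B` -/
abbrev dgm (D : DagData X) {A B : C} (f : A ⟶ B) : D.dg B ⟶ D.dg A := D.dag.map f.op

end DagData

/-- The coherence laws [†-ldc.1]–[†-ldc.6] making `(X, dag, λ⊗, λ⊕, λ⊤, λ⊥, ι)` into a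
†-LDC (as spelled out in the unfolded definition of a †-linearly distributive category),
together with naturality of the laxors and of the involutor. -/
structure DagLaws {X : LDC C} (D : DagData X) : Prop where
  lamTens_natural : ∀ {A A' B B' : C} (f : A ⟶ A') (g : B ⟶ B'),
    X.oth (D.dgm f) (D.dgm g) ≫ (D.lamTens A B).hom
      = (D.lamTens A' B').hom ≫ D.dgm (X.oph f g)
  lamPar_natural : ∀ {A A' B B' : C} (f : A ⟶ A') (g : B ⟶ B'),
    X.oph (D.dgm f) (D.dgm g) ≫ (D.lamPar A B).hom
      = (D.lamPar A' B').hom ≫ D.dgm (X.oth f g)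
  invol_natural : ∀ {A B : C} (f : A ⟶ B),
    f ≫ (D.invol B).hom = (D.invol A).hom ≫ D.dgm (D.dgm f)
  /-- [†-ldc.1] for `λ⊗` and the associators -/
  ldc1a : ∀ A B Cc : C,
    (X.aT (D.dg A) (D.dg B) (D.dg Cc)).inv ≫ X.oth (D.lamTens A B).hom (𝟙 (D.dg Cc))
        ≫ (D.lamTens (X.op A B) Cc).hom
      = X.oth (𝟙 (D.dg A)) (D.lamTens B Cc).hom ≫ (D.lamTens A (X.op B Cc)).hom
          ≫ D.dgm (X.aP A B Cc).hom
  /-- [†-ldc.1] for `λ⊕` and the associators -/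
  ldc1b : ∀ A B Cc : C,
    (X.aP (D.dg A) (D.dg B) (D.dg Cc)).inv ≫ X.oph (D.lamPar A B).hom (𝟙 (D.dg Cc))
        ≫ (D.lamPar (X.ot A B) Cc).hom
      = X.oph (𝟙 (D.dg A)) (D.lamPar B Cc).hom ≫ (D.lamPar A (X.ot B Cc)).hom
          ≫ D.dgm (X.aT A B Cc).hom
  /-- [†-ldc.2] for `λ⊤` (left) -/
  ldc2a : ∀ A : C,
    X.oth D.lamTop.hom (𝟙 (D.dg A)) ≫ (D.lamTens X.pu A).hom
      = (X.luT (D.dg A)).hom ≫ D.dgm (X.luP A).hom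
  /-- [†-ldc.2] for `λ⊤` (right) -/
  ldc2b : ∀ A : C,
    X.oth (𝟙 (D.dg A)) D.lamTop.hom ≫ (D.lamTens A X.pu).hom
      = (X.ruT (D.dg A)).hom ≫ D.dgm (X.ruP A).hom
  /-- [†-ldc.2] for `λ⊥` (left) -/
  ldc2c : ∀ A : C,
    X.oph D.lamBot.hom (𝟙 (D.dg A)) ≫ (D.lamPar X.tu A).hom
      = (X.luP (D.dg A)).hom ≫ D.dgm (X.luT A).hom
  /-- [†-ldc.2] for `λ⊥` (right) -/
  ldc2d : ∀ A : C,
    X.oph (𝟙 (D.dg A)) D.lamBot.hom ≫ (D.lamPar A X.tu).hom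
      = (X.ruP (D.dg A)).hom ≫ D.dgm (X.ruT A).hom
  /-- [†-ldc.3] (first distributor square) -/
  ldc3a : ∀ A B Cc : C,
    X.distL (D.dg A) (D.dg B) (D.dg Cc) ≫ X.oph (D.lamTens A B).hom (𝟙 (D.dg Cc))
        ≫ (D.lamPar (X.op A B) Cc).hom
      = X.oth (𝟙 (D.dg A)) (D.lamPar B Cc).hom ≫ (D.lamTens A (X.ot B Cc)).hom
          ≫ D.dgm (X.distR A B Cc)
  /-- [†-ldc.3] (second distributor square) -/
  ldc3b : ∀ A B Cc : C,
    X.distR (D.dg A) (D.dg B) (D.dg Cc) ≫ X.oph (𝟙 (D.dg A)) (D.lamTens B Cc).hom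
        ≫ (D.lamPar A (X.op B Cc)).hom
      = X.oth (D.lamPar A B).hom (𝟙 (D.dg Cc)) ≫ (D.lamTens (X.ot A B) Cc).hom
          ≫ D.dgm (X.distL A B Cc)
  /-- [†-ldc.4] : `ι_{A⊕B} ; λ⊗† = (ι ⊕ ι) ; λ⊕` -/
  ldc4a : ∀ A B : C,
    (D.invol (X.op A B)).hom ≫ D.dgm (D.lamTens A B).hom
      = X.oph (D.invol A).hom (D.invol B).hom ≫ (D.lamPar (D.dg A) (D.dg B)).hom
  /-- [†-ldc.4] : `ι_{A⊗B} ; λ⊕† = (ι ⊗ ι) ; λ⊗` -/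
  ldc4b : ∀ A B : C,
    (D.invol (X.ot A B)).hom ≫ D.dgm (D.lamPar A B).hom
      = X.oth (D.invol A).hom (D.invol B).hom ≫ (D.lamTens (D.dg A) (D.dg B)).hom
  /-- [†-ldc.5] : `ι_⊥ ; λ⊤† = λ⊥` -/
  ldc5a : (D.invol X.pu).hom ≫ D.dgm D.lamTop.hom = D.lamBot.hom
  /-- [†-ldc.5] : `ι_⊤ ; λ⊥† = λ⊤` -/
  ldc5b : (D.invol X.tu).hom ≫ D.dgm D.lamBot.hom = D.lamTop.hom
  /-- [†-ldc.6] : `ι_{A†} = (ι_A⁻¹)†` -/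
  ldc6 : ∀ A : C, (D.invol (D.dg A)).hom = D.dgm ((D.invol A).inv)

/-- The [†-mix] condition for a †-LDC with a mix map: `λ⊥ ; m† = m ; λ⊤`. -/
def DagMixLaw (M : MixCat C) (D : DagData M.X) : Prop :=
  D.lamBot.hom ≫ D.dgm M.mix = M.mix ≫ D.lamTop.hom

end Dagger

namespace LDC

variable {C : Type u} [Category.{v} C] (X : LDC C)

lemma oth_comp_id {A A' A'' : C} (f : A ⟶ A') (f' : A' ⟶ A'') (B : C) :
    X.oth (f ≫ f') (𝟙 B) = X.oth f (𝟙 B) ≫ X.oth f' (𝟙 B) := by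
  have h := @MonoidalCategory.tensorHom_comp_tensorHom C _ X.T _ _ _ _ _ _ f (𝟙 B) f' (𝟙 B)
  rwa [Category.comp_id, eq_comm] at h

lemma oph_id_comp (A : C) {B B' B'' : C} (g : B ⟶ B') (g' : B' ⟶ B'') :
    X.oph (𝟙 A) (g ≫ g') = X.oph (𝟙 A) g ≫ X.oph (𝟙 A) g' := by
  have h := @MonoidalCategory.tensorHom_comp_tensorHom C _ X.P _ _ _ _ _ _ (𝟙 A) g (𝟙 A) g'
  rwa [Category.comp_id, eq_comm] at h

def distLTop (A B : C) : X.ot A (X.op X.tu B) ⟶ X.op A B :=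
  X.distL A X.tu B ≫ X.oph (X.ruT A).hom (𝟙 B)

def distRBot (A B : C) : X.ot A B ⟶ X.op A (X.ot X.pu B) :=
  X.oth (X.ruP A).inv (𝟙 B) ≫ X.distR A X.pu B

end LDC

namespace MixCat

variable {C : Type u} [Category.{v} C] (M : MixCat C)

def parMix (B : C) : B ⟶ M.X.op M.X.tu B :=
  (M.X.luP B).inv ≫ M.X.oph M.mix (𝟙 B)

def tensorMix (B : C) : M.X.ot M.X.pu B ⟶ B :=
  M.X.oth M.mix (𝟙 B) ≫ (M.X.luT B).hom

lemma mx_eq_distLTop (A B : C) : M.mx A B = M.X.oth (𝟙 A) (M.parMix B) ≫ M.X.distLTop A B :=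
  rfl

lemma mx_eq_distRBot (A B : C) :
    M.mx A B = M.X.distRBot A B ≫ M.X.oph (𝟙 A) (M.tensorMix B) := by
  rw [LDC.distRBot, Category.assoc]
  exact M.mix_coh A B

end MixCat

namespace DagData

variable {C : Type u} [Category.{v} C] {X : LDC C} (D : DagData X)

lemma dgm_comp {A B E : C} (f : A ⟶ B) (g : B ⟶ E) : D.dgm (f ≫ g) = D.dgm g ≫ D.dgm f := by
  simp [DagData.dgm]

lemma dgm_id (A : C) : D.dgm (𝟙 A) = 𝟙 (D.dg A) := by
  simp [DagData.dgm]

end DagData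

namespace DagLaws

variable {C : Type u} [Category.{v} C] {X : LDC C} {D : DagData X}

lemma dgm_ruT (hD : DagLaws D) (A : C) :
    D.dgm (X.ruT A).hom
      = (X.ruP (D.dg A)).inv ≫ X.oph (𝟙 (D.dg A)) D.lamBot.hom ≫ (D.lamPar A X.tu).hom := by
  rw [hD.ldc2d A, Iso.inv_hom_id_assoc]

lemma lamTens_dgm_distLTop (hD : DagLaws D) (A B : C) :
    (D.lamTens A B).hom ≫ D.dgm (X.distLTop A B)
      = X.distRBot (D.dg A) (D.dg B)
          ≫ X.oph (𝟙 (D.dg A)) (X.oth D.lamBot.hom (𝟙 (D.dg B)) ≫ (D.lamTens X.tu B).hom)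
          ≫ (D.lamPar A (X.op X.tu B)).hom := by
  have hruT : X.oth (D.dgm (X.ruT A).hom) (𝟙 (D.dg B))
      = X.oth (X.ruP (D.dg A)).inv (𝟙 (D.dg B))
          ≫ X.oth (X.oph (𝟙 (D.dg A)) D.lamBot.hom) (𝟙 (D.dg B))
          ≫ X.oth (D.lamPar A X.tu).hom (𝟙 (D.dg B)) := by
    rw [hD.dgm_ruT, X.oth_comp_id, X.oth_comp_id]
  rw [LDC.distLTop, D.dgm_comp, ← reassoc_of% (hD.lamTens_natural (X.ruT A).hom (𝟙 B)),
    D.dgm_id, hruT, Category.assoc, Category.assoc, ← hD.ldc3b A X.tu B,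
    reassoc_of% (X.distR_natural (𝟙 (D.dg A)) D.lamBot.hom (𝟙 (D.dg B))), LDC.distRBot,
    X.oph_id_comp, Category.assoc, Category.assoc]

end DagLaws

lemma DagMixLaw.lamTens_dgm_parMix {C : Type u} [Category.{v} C] {M : MixCat C}
    {D : DagData M.X} (hD : DagLaws D) (hmix : DagMixLaw M D) (B : C) :
    M.X.oth D.lamBot.hom (𝟙 (D.dg B)) ≫ (D.lamTens M.X.tu B).hom ≫ D.dgm (M.parMix B)
      = M.tensorMix (D.dg B) := by
  rw [MixCat.parMix, D.dgm_comp, ← reassoc_of% (hD.lamTens_natural M.mix (𝟙 B)), D.dgm_id,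
    ← reassoc_of% (M.X.oth_comp_id D.lamBot.hom (D.dgm M.mix) (D.dg B)), hmix,
    M.X.oth_comp_id, Category.assoc, reassoc_of% (hD.ldc2a B), ← D.dgm_comp, Iso.inv_hom_id,
    D.dgm_id, Category.comp_id, MixCat.tensorMix]

theorem dagger_mix_mixor_square
    {C : Type u} [Category.{v} C]
    (M : MixCat C) (D : DagData M.X) (hD : DagLaws D) (hmix : DagMixLaw M D) :
    ∀ A B : C,
      (D.lamTens A B).hom ≫ D.dgm (M.mx A B)
        = M.mx (D.dg A) (D.dg B) ≫ (D.lamPar A B).hom := by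
  intro A B
  rw [M.mx_eq_distLTop, D.dgm_comp, reassoc_of% (hD.lamTens_dgm_distLTop A B),
    ← hD.lamPar_natural (𝟙 A) (M.parMix B), D.dgm_id,
    ← reassoc_of% (M.X.oph_id_comp (D.dg A)), Category.assoc, hmix.lamTens_dgm_parMix hD,
    M.mx_eq_distRBot, Category.assoc]
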